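/- arXiv:1901.00384 — 3 statements merged into one kernel-verified Lean document; each statement's English description precedes it below -/
import Mathlib

section
/- Let V be a vector space over ℚ and deg : V → ℚ a linear form. Let Σ ⊆ V be a subsemigroup (nonempty, closed under addition) such that deg(σ) ∈ ℤ for all σ ∈ Σ, some σ₀ ∈ Σ satisfies deg(σ₀) = 1, and the ℚ-linear span of Σ is infinite-dimensional. Then the growth rate of the Hilbert function H_Σ is not polynomial: for every natural number r and every C > 0 there exists D such that for all integers d ≥ D, the set Σ_d = {σ ∈ Σ : deg(σ) = d} is infinite or #Σ_d ≥ C·d^{r−1}. -/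
/-!
Modulo the line `ℚ σ₀` the set `Σ` still spans an infinite-dimensional space, so for every `m`
it contains `w₁, …, w_m` that stay linearly independent modulo `σ₀`; adding multiples of `σ₀`
we may take them all of one degree `k`. For `0 ≤ aᵢ < B` with `k m B < d` the elements
`(d - k ∑ aᵢ) σ₀ + ∑ aᵢ wᵢ` of `Σ_d` are pairwise distinct, and `B ≈ d / (k m)` gives
`#Σ_d ≳ (d / (k m))^m`, which eventually beats `C d^(m-1)`.
-/

open Filter Submodule

section AddClosed

variable {M : Type*} [AddCommMonoid M] {S : Set M}

theorem add_mem_of_mem_addSubmonoidClosure (hadd : ∀ x ∈ S, ∀ y ∈ S, x + y ∈ S) {x y : M}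
    (hx : x ∈ S) (hy : y ∈ AddSubmonoid.closure S) : x + y ∈ S := by
  induction hy using AddSubmonoid.closure_induction generalizing x with
  | mem y hy => exact hadd x hx y hy
  | zero => simpa using hx
  | add y z _ _ hy hz => rw [← add_assoc]; exact hz (hy hx)

theorem add_nsmul_mem_of_add_closed (hadd : ∀ x ∈ S, ∀ y ∈ S, x + y ∈ S) {x y : M}
    (hx : x ∈ S) (hy : y ∈ S) (n : ℕ) : x + n • y ∈ S :=
  add_mem_of_mem_addSubmonoidClosure hadd hx (nsmul_mem (AddSubmonoid.subset_closure hy) n)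

end AddClosed

section LinearAlgebra

variable {K V : Type*} [DivisionRing K] [AddCommGroup V] [Module K V]

theorem exists_linearIndependent_nat_of_not_finite_span {T : Set V}
    (hT : ¬ Module.Finite K (span K T)) :
    ∃ v : ℕ → V, (∀ n, v n ∈ T) ∧ LinearIndependent K v := by
  obtain ⟨b, hbT, hspan, hb⟩ := exists_linearIndependent K T
  have hb_inf : b.Infinite := fun hfin => hT (hspan ▸ FiniteDimensional.span_of_finite K hfin)
  let e := hb_inf.natEmbedding
  exact ⟨fun n => e n, fun n => hbT (e n).2, hb.comp e e.injective⟩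

theorem not_finite_span_image_mkQ {S : Set V} {p : Submodule K V} (hp : p.FG)
    (hS : ¬ Module.Finite K (span K S)) : ¬ Module.Finite K (span K (p.mkQ '' S)) := by
  rw [Module.Finite.iff_fg, span_image] at *
  refine fun h => hS (fg_of_fg_map_of_fg_inf_ker p.mkQ h ?_)
  rw [ker_mkQ]
  exact hp.of_le inf_le_right

theorem exists_seq_mem_linearIndependent_mkQ {S : Set V} {p : Submodule K V} (hp : p.FG)
    (hS : ¬ Module.Finite K (span K S)) :
    ∃ u : ℕ → V, (∀ n, u n ∈ S) ∧ LinearIndependent K (p.mkQ ∘ u) := by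
  obtain ⟨v, hvS, hv⟩ :=
    exists_linearIndependent_nat_of_not_finite_span (not_finite_span_image_mkQ hp hS)
  choose u huS hu using hvS
  exact ⟨u, huS, (funext hu : p.mkQ ∘ u = v) ▸ hv⟩

theorem LinearIndependent.injective_sum_nsmul [CharZero K] {ι : Type*} [Fintype ι]
    {v : ι → V} (hv : LinearIndependent K v) :
    Function.Injective fun a : ι → ℕ => ∑ i, a i • v i := by
  intro a b hab
  have h : (fun i => (a i : K)) = fun i => (b i : K) := hv.fintypeLinearCombination_injective
    (by simpa [Fintype.linearCombination_apply, Nat.cast_smul_eq_nsmul] using hab)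
  funext i
  exact_mod_cast congr_fun h i

end LinearAlgebra

theorem le_two_mul_mul_pred_div {c d : ℕ} (hc : 0 < c) (h : c < d) :
    d ≤ 2 * c * ((d - 1) / c) := by
  have hq : 1 ≤ (d - 1) / c := (Nat.one_le_div_iff hc).2 (by omega)
  have hρ := Nat.mod_lt (d - 1) hc
  have hd : c * ((d - 1) / c) + (d - 1) % c + 1 = d := by
    have := Nat.div_add_mod (d - 1) c
    omega
  generalize (d - 1) / c = q at *
  generalize (d - 1) % c = ρ at *
  nlinarith

theorem eventually_mul_pow_le_pred_div_pow {c : ℕ} (hc : 0 < c) (n : ℕ) (C : ℝ) :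
    ∀ᶠ d : ℕ in atTop, C * (d : ℝ) ^ n ≤ (((d - 1) / c : ℕ) : ℝ) ^ (n + 1) := by
  filter_upwards [eventually_gt_atTop c, eventually_ge_atTop ⌈C * (2 * c) ^ (n + 1)⌉₊]
    with d hcd hCd
  rw [← mul_le_mul_iff_of_pos_left (by positivity : (0 : ℝ) < (2 * c) ^ (n + 1))]
  calc (2 * c : ℝ) ^ (n + 1) * (C * (d : ℝ) ^ n) = C * (2 * c) ^ (n + 1) * d ^ n := by ring
    _ ≤ d * d ^ n := by gcongr; exact Nat.ceil_le.1 hCd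
    _ = d ^ (n + 1) := by ring
    _ ≤ (2 * c * ((d - 1) / c : ℕ)) ^ (n + 1) := by
        gcongr; exact_mod_cast le_two_mul_mul_pred_div hc hcd
    _ = (2 * c) ^ (n + 1) * (((d - 1) / c : ℕ) : ℝ) ^ (n + 1) := by rw [mul_pow]

section GradedSemigroup

variable {V : Type*} [AddCommGroup V] [Module ℚ V] (deg : V →ₗ[ℚ] ℚ) {S : Set V}
  (hadd : ∀ x ∈ S, ∀ y ∈ S, x + y ∈ S) {σ₀ : V} (hσ₀ : σ₀ ∈ S) (hdeg : deg σ₀ = 1)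
include hadd hσ₀ hdeg

theorem exists_mem_deg_eq_mkQ_eq {x : V} (hx : x ∈ S) {m k : ℤ} (hm : deg x = m)
    (hk : m ≤ k) : ∃ y ∈ S, deg y = k ∧ (ℚ ∙ σ₀).mkQ y = (ℚ ∙ σ₀).mkQ x := by
  refine ⟨x + (k - m).toNat • σ₀, add_nsmul_mem_of_add_closed hadd hx hσ₀ _, ?_, ?_⟩
  · have : (((k - m).toNat : ℤ) : ℚ) = k - m := by
      rw [Int.toNat_of_nonneg (by omega)]; push_cast; ring
    simp only [map_add, map_nsmul, hm, hdeg, nsmul_eq_mul, mul_one]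
    rw [← Int.cast_natCast, this]
    ring
  · simp [(Quotient.mk_eq_zero _).2 (mem_span_singleton_self σ₀)]

theorem exists_family_deg_eq {ι : Type*} [Finite ι] {u : ι → V} (huS : ∀ i, u i ∈ S)
    (hint : ∀ x ∈ S, ∃ m : ℤ, deg x = m) :
    ∃ k : ℕ, 0 < k ∧ ∃ w : ι → V, (∀ i, w i ∈ S) ∧ (∀ i, deg (w i) = k) ∧
      (ℚ ∙ σ₀).mkQ ∘ w = (ℚ ∙ σ₀).mkQ ∘ u := by
  choose m hm using fun i => hint _ (huS i)
  obtain ⟨k, hk⟩ := Finite.exists_le fun i => (m i).toNat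
  choose w hwS hwdeg hw using fun i =>
    exists_mem_deg_eq_mkQ_eq deg hadd hσ₀ hdeg (huS i) (hm i) (k := k + 1)
      (by have := hk i; omega)
  exact ⟨k + 1, k.succ_pos, w, hwS, fun i => by rw [hwdeg]; push_cast; rfl, funext hw⟩

theorem pow_le_card_deg_eq {m k : ℕ} {w : Fin m → V} (hwS : ∀ i, w i ∈ S)
    (hwdeg : ∀ i, deg (w i) = k) (hw : LinearIndependent ℚ ((ℚ ∙ σ₀).mkQ ∘ w)) {d : ℕ}
    (hd : 0 < d) (hfin : {x ∈ S | deg x = d}.Finite) :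
    ((d - 1) / (k * m)) ^ m ≤ Nat.card {x ∈ S | deg x = d} := by
  set B := (d - 1) / (k * m)
  have hbox (a : Fin m → Fin B) : k * ∑ i, (a i : ℕ) < d := by
    calc k * ∑ i, (a i : ℕ) ≤ k * ∑ _i : Fin m, B := by gcongr with i; exact (a i).is_lt.le
      _ = B * (k * m) := by simp; ring
      _ < d := by have : B * (k * m) ≤ d - 1 := Nat.div_mul_le_self _ _; omega
  have hF (a : Fin m → Fin B) :
      (d - k * ∑ i, (a i : ℕ)) • σ₀ + ∑ i, (a i : ℕ) • w i ∈ {x ∈ S | deg x = d} := by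
    constructor
    · rw [← Nat.sub_one_add_one (Nat.sub_ne_zero_of_lt (hbox a)), succ_nsmul', add_assoc]
      exact add_mem_of_mem_addSubmonoidClosure hadd hσ₀ (add_mem
        (nsmul_mem (AddSubmonoid.subset_closure hσ₀) _)
        (sum_mem fun i _ => nsmul_mem (AddSubmonoid.subset_closure (hwS i)) _))
    · simp only [map_add, map_nsmul, map_sum, hdeg, hwdeg, nsmul_eq_mul, mul_one]
      rw [Nat.cast_sub (hbox a).le]
      push_cast
      rw [Finset.mul_sum]
      ring_nf
  have hmkQ (a : Fin m → Fin B) :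
      (ℚ ∙ σ₀).mkQ ((d - k * ∑ i, (a i : ℕ)) • σ₀ + ∑ i, (a i : ℕ) • w i) =
        ∑ i, (a i : ℕ) • ((ℚ ∙ σ₀).mkQ ∘ w) i := by
    simp only [map_add, map_sum, map_nsmul, mkQ_apply, smul_zero, zero_add, Function.comp_apply,
      (Quotient.mk_eq_zero _).2 (mem_span_singleton_self σ₀)]
  have := hfin.to_subtype
  calc B ^ m = Nat.card (Fin m → Fin B) := by simp
    _ ≤ _ := Nat.card_le_card_of_injective (fun a => ⟨_, hF a⟩) fun a b hab => by
      have h := congrArg ((ℚ ∙ σ₀).mkQ ∘ Subtype.val) hab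
      simp only [Function.comp_apply, hmkQ] at h
      funext i
      exact Fin.val_injective (congr_fun (hw.injective_sum_nsmul h) i)

end GradedSemigroup

theorem stmt2_general {V : Type*} [AddCommGroup V] [Module ℚ V] (deg : V →ₗ[ℚ] ℚ)
    (S : Set V) (hadd : ∀ x ∈ S, ∀ y ∈ S, x + y ∈ S)
    (hint : ∀ x ∈ S, ∃ m : ℤ, deg x = (m : ℚ))
    (hdeg1 : ∃ σ₀ ∈ S, deg σ₀ = 1)
    (hinf : ¬ Module.Finite ℚ ↥(Submodule.span ℚ S)) :
    ∀ r : ℕ, ∀ C : ℝ, 0 < C → ∃ D : ℕ, ∀ d : ℕ, D ≤ d →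
      {x ∈ S | deg x = (d : ℚ)}.Infinite ∨
      C * (d : ℝ) ^ (r - 1) ≤ (Nat.card {x ∈ S | deg x = (d : ℚ)} : ℝ) := by
  intro r C _
  obtain ⟨σ₀, hσ₀, hdeg⟩ := hdeg1
  obtain ⟨u, huS, hu⟩ := exists_seq_mem_linearIndependent_mkQ (fg_span_singleton σ₀) hinf
  obtain ⟨k, hk, w, hwS, hwdeg, hw⟩ := exists_family_deg_eq deg hadd hσ₀ hdeg
    (u := fun i : Fin (r - 1 + 1) => u i) (fun i => huS i) hint
  have hw_indep : LinearIndependent ℚ ((ℚ ∙ σ₀).mkQ ∘ w) := hw ▸ hu.comp _ Fin.val_injective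
  obtain ⟨D, hD⟩ := eventually_atTop.1 <|
    eventually_mul_pow_le_pred_div_pow (Nat.mul_pos hk (r - 1).succ_pos) (r - 1) C
  refine ⟨max D 1, fun d hd => or_iff_not_imp_left.2 fun hfin => ?_⟩
  calc C * (d : ℝ) ^ (r - 1) ≤ (((d - 1) / (k * (r - 1 + 1)) : ℕ) : ℝ) ^ (r - 1 + 1) :=
        hD d (le_of_max_le_left hd)
    _ ≤ _ := by
        exact_mod_cast pow_le_card_deg_eq deg hadd hσ₀ hdeg hwS hwdeg hw_indep
          (le_of_max_le_right hd) (Set.not_infinite.1 hfin)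

theorem stmt2 {V : Type*} [AddCommGroup V] [Module ℚ V] (deg : V →ₗ[ℚ] ℚ)
    (S : Set V) (hne : S.Nonempty) (hadd : ∀ x ∈ S, ∀ y ∈ S, x + y ∈ S)
    (hint : ∀ x ∈ S, ∃ m : ℤ, deg x = (m : ℚ))
    (hdeg1 : ∃ σ₀ ∈ S, deg σ₀ = 1)
    (hinf : ¬ Module.Finite ℚ ↥(Submodule.span ℚ S)) :
    ∀ r : ℕ, ∀ C : ℝ, 0 < C → ∃ D : ℕ, ∀ d : ℕ, D ≤ d →
      {x ∈ S | deg x = (d : ℚ)}.Infinite ∨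
      C * (d : ℝ) ^ (r - 1) ≤ (Nat.card {x ∈ S | deg x = (d : ℚ)} : ℝ) :=
  stmt2_general deg S hadd hint hdeg1 hinf
end

section
/- Let M be a commutative monoid equipped with a linear order ≤ that is compatible with addition (σ < τ implies σ + ρ < τ + ρ for all ρ ∈ M), and let deg : M → ℤ be a monotone additive map such that the subgroup of ℤ generated by deg(M) is ℤ. Let r ≥ 1 and let ι₁, ι₂ : M → ℝ^r be injective additive maps that are order embeddings for the lexicographic order on ℝ^r with first coordinate most significant (σ ≤ τ if and only if ι_j(σ) ≤_lex ι_j(τ)), and such that the subgroup of ℝ^r generated by ι_j(M) equals ℤ^r for both j = 1, 2. Then: (1) (ι_j(σ))₁ = deg(σ) for every σ ∈ M and both j; (2) there exist a lower-triangular integer matrix A ∈ SL_{r−1}(ℤ) with all diagonal entries equal to 1 and a vector b ∈ ℤ^{r−1} such that the affine map y ↦ A·y + b carries Δ₁ onto Δ₂, where Δ_j ⊆ ℝ^{r−1} is the topological closure of { (1/deg(σ))·((ι_j(σ))₂, …, (ι_j(σ))_r) : σ ∈ M, deg(σ) ≠ 0 }. -/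
/-- Strict lexicographic order on `ℝ^r`, first coordinate most significant. -/
def rlexLT {r : ℕ} (x y : Fin r → ℝ) : Prop :=
  ∃ i : Fin r, x i < y i ∧ ∀ j : Fin r, j < i → x j = y j

/-- Lexicographic order on `ℝ^r`, first coordinate most significant. -/
def rlexLE {r : ℕ} (x y : Fin r → ℝ) : Prop :=
  rlexLT x y ∨ x = y

/-!
Both embeddings take values in `ℤ^r` and reflect the order, so every additive map out of `M`
factors through the group `ℤ^r` that `M` generates, and the factorisation of a monotone map is
monotone for the lexicographic order. A monotone additive functional on lexicographic `ℤ^r`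
vanishes on `e₂, …, e_r`, which are infinitesimal compared with `e₁`; since `deg` generates `ℤ`,
it is the first coordinate. In the same way the transition map `ι₁ σ ↦ ι₂ σ` is an integer matrix
that is lower triangular with non-negative diagonal, and it maps `ℤ^r` onto `ℤ^r`, so its
determinant is a unit and its diagonal consists of ones. After dividing by the first
coordinate, its lower right block and its first column give an affine map carrying the points of
`Δ₁` to those of `Δ₂`; it is a homeomorphism, hence also carries closures to closures.
-/

open Function Matrix

section LexOrder

variable {r : ℕ}

theorem rlexLE_intCast_iff (x y : Fin r → ℤ) :
    rlexLE (fun i => (x i : ℝ)) (fun i => (y i : ℝ)) ↔ toLex x ≤ toLex y := by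
  rw [le_iff_lt_or_eq, rlexLE, rlexLT, toLex_inj, funext_iff, funext_iff]
  simp only [Int.cast_lt, Int.cast_inj]
  exact or_congr_left (exists_congr fun i => and_comm)

theorem Pi.Lex.nonneg_apply_of_forall_lt {ι β : Type*} [LinearOrder ι] [Zero β] [PartialOrder β]
    {x : ι → β} (hx : 0 ≤ toLex x) {i : ι} (hlt : ∀ j < i, x j = 0) : 0 ≤ x i := by
  rcases hx.lt_or_eq with ⟨k, hk, hpos⟩ | heq
  · rcases lt_trichotomy k i with hki | rfl | hik
    · exact absurd (hlt k hki) (hpos.ne' : x k ≠ 0)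
    · exact hpos.le
    · exact (hk i hik).le
  · exact (congrFun (toLex_inj.mp heq) i).le

theorem nonneg_and_eq_zero_of_dotProduct_nonneg (v : Fin r → ℤ) (j : Fin r)
    (hv : ∀ x : Fin r → ℤ, (∀ l < j, x l = 0) → 0 ≤ toLex x → 0 ≤ v ⬝ᵥ x) :
    0 ≤ v j ∧ ∀ i, j < i → v i = 0 := by
  have hj : 0 ≤ v j := by
    have hpos : toLex (0 : Fin r → ℤ) < toLex (Pi.single j 1) :=
      ⟨j, fun l hl => by simp [hl.ne], by simp⟩
    simpa using hv _ (fun l hl => by simp [hl.ne]) hpos.le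
  refine ⟨hj, fun i hji => ?_⟩
  have hadd : ∀ k : ℤ, 0 ≤ v j + v i * k := fun k => by
    have hpos : toLex (0 : Fin r → ℤ) < toLex (Pi.single j 1 + Pi.single i k) :=
      ⟨j, fun l hl => by simp [hl.ne, (hl.trans hji).ne], by simp [hji.ne]⟩
    simpa [dotProduct_add] using
      hv _ (fun l hl => by simp [hl.ne, (hl.trans hji).ne]) hpos.le
  by_contra hne
  -- for `k = -(v j + 1) * v i` the value `v j + v i * k` is negative
  have := hadd (-(v j + 1) * v i)
  nlinarith [sq_pos_of_ne_zero hne, Int.add_one_le_iff.mpr (sq_pos_of_ne_zero hne)]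

theorem Matrix.isLowerTriangular_of_toLex_mulVec_nonneg {N : Matrix (Fin r) (Fin r) ℤ}
    (hN : ∀ x, 0 ≤ toLex x → 0 ≤ toLex (N *ᵥ x)) : N.IsLowerTriangular ∧ ∀ i, 0 ≤ N i i := by
  have rows : ∀ i, 0 ≤ N i i ∧ ∀ j, i < j → N i j = 0 := by
    intro i
    induction i using WellFoundedLT.induction with
    | _ i ih =>
      refine nonneg_and_eq_zero_of_dotProduct_nonneg (N i) i fun x hx hx0 =>
        Pi.Lex.nonneg_apply_of_forall_lt (hN x hx0) fun l hl => ?_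
      rw [mulVec, dotProduct]
      refine Finset.sum_eq_zero fun m _ => ?_
      rcases lt_or_ge l m with hlm | hml
      · simp [(ih l hl).2 m hlm]
      · simp [hx m (hml.trans_lt hl)]
  exact ⟨fun i j hij => (rows i).2 j hij, fun i => (rows i).1⟩

theorem AddMonoidHom.apply_toLex_eq_dotProduct (g : Lex (Fin r → ℤ) →+ ℤ)
    (x : Fin r → ℤ) : g (toLex x) = (fun l => g (toLex (Pi.single l 1))) ⬝ᵥ x := by
  have := LinearMap.pi_apply_eq_sum_univ
    (g.comp (toLexAddEquiv (Fin r → ℤ)).toAddMonoidHom).toIntLinearMap x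
  simp only [AddMonoidHom.coe_toIntLinearMap, AddEquiv.coe_toAddMonoidHom,
    comp_apply, coe_toLexAddEquiv, smul_eq_mul] at this
  rw [this, dotProduct]
  refine Finset.sum_congr rfl fun i _ => ?_
  rw [mul_comm]
  congr
  ext j
  simp [Pi.single_apply, eq_comm]

end LexOrder

theorem Matrix.diag_eq_one_of_isLowerTriangular {m : Type*} [Fintype m] [LinearOrder m]
    {N : Matrix m m ℤ} (hlow : N.IsLowerTriangular) (hdiag : ∀ i, 0 ≤ N i i)
    (hsurj : Surjective N.mulVec) (i : m) : N i i = 1 := by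
  obtain ⟨C, hC⟩ := mulVec_surjective_iff_exists_right_inverse.mp hsurj
  have hunit := isUnit_det_of_right_inverse hC
  rw [det_of_isLowerTriangular N hlow] at hunit
  exact Int.eq_one_of_dvd_one (hdiag i) <| (Finset.dvd_prod_of_mem (fun i => N i i)
    (Finset.mem_univ i)).trans (isUnit_iff_dvd_one.mp hunit)

theorem Matrix.IsLowerTriangular.det_eq_one {R m : Type*} [CommRing R] [Fintype m] [LinearOrder m]
    {A : Matrix m m R} (h : A.IsLowerTriangular) (hdiag : ∀ i, A i i = 1) : A.det = 1 := by
  simp [det_of_isLowerTriangular A h, hdiag]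

theorem Matrix.mulVec_succ_div_eq {K : Type*} [Field K] {n : ℕ}
    (N : Matrix (Fin (n + 1)) (Fin (n + 1)) K) (x : Fin (n + 1) → K) (hx : x 0 ≠ 0) :
    (fun i : Fin n => (N *ᵥ x) i.succ / x 0) =
      N.submatrix Fin.succ Fin.succ *ᵥ (fun i => x i.succ / x 0) + fun i => N i.succ 0 := by
  funext i
  simp only [mulVec, dotProduct, Fin.sum_univ_succ, Pi.add_apply, submatrix_apply]
  rw [add_div, mul_div_cancel_right₀ _ hx, Finset.sum_div, add_comm]
  simp_rw [mul_div_assoc]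

theorem Matrix.image_setOf_succ_div_eq {S K : Type*} [Field K] {n : ℕ}
    (N : Matrix (Fin (n + 1)) (Fin (n + 1)) K) (u : S → Fin (n + 1) → K) (d : S → K)
    (hd : ∀ s, d s ≠ 0 → u s 0 = d s) :
    (fun y => N.submatrix Fin.succ Fin.succ *ᵥ y + fun i => N i.succ 0) ''
        {y | ∃ s, d s ≠ 0 ∧ y = fun i => u s i.succ / d s} =
      {y | ∃ s, d s ≠ 0 ∧ y = fun i => (N *ᵥ u s) i.succ / d s} := by
  have key : ∀ s, d s ≠ 0 → N.submatrix Fin.succ Fin.succ *ᵥ (fun i => u s i.succ / d s) +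
      (fun i => N i.succ 0) = fun i => (N *ᵥ u s) i.succ / d s := fun s hs => by
    have h0 := hd s hs
    rw [← h0] at hs ⊢
    exact (mulVec_succ_div_eq N _ hs).symm
  ext y
  constructor
  · rintro ⟨_, ⟨s, hs, rfl⟩, rfl⟩
    exact ⟨s, hs, key s hs⟩
  · rintro ⟨s, hs, rfl⟩
    exact ⟨_, ⟨s, hs, rfl⟩, key s hs⟩

theorem Matrix.image_closure_mulVec_add {ι K : Type*} [Fintype ι] [DecidableEq ι] [CommRing K]
    [TopologicalSpace K] [IsTopologicalRing K] {A : Matrix ι ι K} (hA : IsUnit A.det)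
    (b : ι → K) (s : Set (ι → K)) :
    (fun y => A *ᵥ y + b) '' closure s = closure ((fun y => A *ᵥ y + b) '' s) :=
  let φ : (ι → K) ≃ₜ (ι → K) :=
    { toFun := fun y => A *ᵥ y + b
      invFun := fun z => A⁻¹ *ᵥ (z - b)
      left_inv := fun y => by simp [mulVec_mulVec, nonsing_inv_mul _ hA]
      right_inv := fun z => by simp [mulVec_mulVec, mul_nonsing_inv _ hA]
      continuous_toFun := (continuous_const.matrix_mulVec continuous_id).add continuous_const
      continuous_invFun :=
        continuous_const.matrix_mulVec (continuous_id.sub continuous_const) }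
  φ.image_closure s

section Factorization

variable {M V W : Type*} [AddCommMonoid M] [AddCommGroup V] [AddCommGroup W]

theorem AddMonoidHom.exists_sub_eq_of_mem_closure_range (ι : M →+ V) {x : V}
    (hx : x ∈ AddSubgroup.closure (Set.range ι)) : ∃ a b, ι a - ι b = x := by
  induction hx using AddSubgroup.closure_induction with
  | mem x hx => obtain ⟨a, rfl⟩ := hx; exact ⟨a, 0, by simp⟩
  | zero => exact ⟨0, 0, by simp⟩
  | add x y _ _ hx hy =>
    obtain ⟨a, b, rfl⟩ := hx
    obtain ⟨c, d, rfl⟩ := hy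
    exact ⟨a + c, b + d, by simp only [map_add]; abel⟩
  | neg x _ hx => obtain ⟨a, b, rfl⟩ := hx; exact ⟨b, a, (neg_sub _ _).symm⟩

theorem AddMonoidHom.sub_eq_sub_of_injective {ι : M →+ V} (hι : Injective ι) (f : M →+ W)
    {a b c d : M} (h : ι a - ι b = ι c - ι d) : f a - f b = f c - f d := by
  rw [sub_eq_sub_iff_add_eq_add, ← map_add, ← map_add] at h ⊢
  rw [hι h]

theorem AddMonoidHom.exists_comp_eq_of_injective {ι : M →+ V} (hι : Injective ι)
    (hgen : AddSubgroup.closure (Set.range ι) = ⊤) (f : M →+ W) : ∃ g : V →+ W, g.comp ι = f := by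
  choose a b hab using fun x : V =>
    ι.exists_sub_eq_of_mem_closure_range (hgen ▸ AddSubgroup.mem_top x)
  refine ⟨AddMonoidHom.mk' (fun x => f (a x) - f (b x)) fun x y => ?_, ?_⟩
  · have : ι (a (x + y)) - ι (b (x + y)) = ι (a x + a y) - ι (b x + b y) := by
      rw [hab, map_add, map_add, add_sub_add_comm, hab, hab]
    simp only [sub_eq_sub_of_injective hι f this, map_add]; abel
  · ext σ
    have : ι (a (ι σ)) - ι (b (ι σ)) = ι σ - ι 0 := by rw [hab, map_zero, sub_zero]
    simpa using sub_eq_sub_of_injective hι f this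

theorem AddMonoidHom.map_nonneg_of_comp_eq [Preorder M] [PartialOrder V] [IsOrderedAddMonoid V]
    [PartialOrder W] [IsOrderedAddMonoid W] {ι : M →+ V} (hι : ∀ a b, ι a ≤ ι b → a ≤ b)
    (hgen : AddSubgroup.closure (Set.range ι) = ⊤) {f : M →+ W} (hf : Monotone f)
    {g : V →+ W} (hg : g.comp ι = f) {x : V} (hx : 0 ≤ x) : 0 ≤ g x := by
  obtain ⟨a, b, rfl⟩ := ι.exists_sub_eq_of_mem_closure_range (hgen ▸ AddSubgroup.mem_top x)
  rw [map_sub, ← g.comp_apply, ← g.comp_apply, hg, sub_nonneg]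
  exact hf (hι b a (sub_nonneg.mp hx))

end Factorization

section LatticeEmbedding

variable {M : Type*} [AddCommMonoid M] {r : ℕ}

theorem exists_lex_int_lift [Preorder M] (ι : M → (Fin r → ℝ))
    (hadd : ∀ a b, ι (a + b) = ι a + ι b) (hord : ∀ a b, a ≤ b ↔ rlexLE (ι a) (ι b))
    (hgrp : (AddSubgroup.closure (Set.range ι) : Set (Fin r → ℝ)) =
      {x | ∀ i, ∃ m : ℤ, x i = (m : ℝ)}) :
    ∃ κ : M →+ Lex (Fin r → ℤ), (∀ σ i, ι σ i = ofLex (κ σ) i) ∧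
      (∀ a b, a ≤ b ↔ κ a ≤ κ b) ∧ AddSubgroup.closure (Set.range κ) = ⊤ := by
  have hint : ∀ σ i, ∃ m : ℤ, ι σ i = m := fun σ => by
    have : ι σ ∈ (AddSubgroup.closure (Set.range ι) : Set _) :=
      AddSubgroup.subset_closure ⟨σ, rfl⟩
    rwa [hgrp] at this
  choose c hc using hint
  let κ : M →+ Lex (Fin r → ℤ) := AddMonoidHom.mk' (fun σ => toLex (c σ)) fun a b => by
    rw [← toLex_add, toLex_inj]
    ext i
    have := congrFun (hadd a b) i
    simp only [Pi.add_apply, hc] at this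
    exact_mod_cast this
  refine ⟨κ, hc, fun a b => ?_, ?_⟩
  · rw [hord, funext (hc a), funext (hc b), rlexLE_intCast_iff]
    rfl
  · refine eq_top_iff.mpr fun y _ => ?_
    have hy : (fun i => (ofLex y i : ℝ)) ∈ AddSubgroup.closure (Set.range ι) := by
      rw [← SetLike.mem_coe, hgrp]
      exact fun i => ⟨_, rfl⟩
    obtain ⟨a, b, hab⟩ := (AddMonoidHom.mk' ι hadd).exists_sub_eq_of_mem_closure_range hy
    have : y = κ a - κ b := by
      rw [← ofLex_inj]
      ext i
      have := congrFun hab i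
      simp only [AddMonoidHom.mk'_apply, Pi.sub_apply, hc] at this
      exact_mod_cast this.symm
    rw [this]
    exact sub_mem (AddSubgroup.subset_closure ⟨a, rfl⟩) (AddSubgroup.subset_closure ⟨b, rfl⟩)

variable [PartialOrder M]

theorem eq_ofLex_zero_of_monotone {κ : M →+ Lex (Fin (r + 1) → ℤ)}
    (hκ : ∀ a b, a ≤ b ↔ κ a ≤ κ b) (hgen : AddSubgroup.closure (Set.range κ) = ⊤)
    {deg : M →+ ℤ} (hmono : Monotone deg) (hsurj : AddSubgroup.closure (Set.range deg) = ⊤)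
    (σ : M) : deg σ = ofLex (κ σ) 0 := by
  obtain ⟨g, hg⟩ := AddMonoidHom.exists_comp_eq_of_injective
    (OrderEmbedding.ofMapLEIff κ fun a b => (hκ a b).symm).injective hgen deg
  set v : Fin (r + 1) → ℤ := fun l => g (toLex (Pi.single l 1))
  have hgv : ∀ x, g (toLex x) = v ⬝ᵥ x := g.apply_toLex_eq_dotProduct
  obtain ⟨hv0, hvi⟩ := nonneg_and_eq_zero_of_dotProduct_nonneg v 0 fun x _ hx =>
    hgv x ▸ AddMonoidHom.map_nonneg_of_comp_eq (fun a b => (hκ a b).2) hgen hmono hg hx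
  have hdeg : ∀ σ, deg σ = v 0 * ofLex (κ σ) 0 := fun σ => by
    have hv : v = Pi.single 0 (v 0) := by
      ext i
      rcases eq_or_ne i 0 with rfl | hi
      · simp
      · simp [hi, hvi i (Fin.pos_of_ne_zero hi)]
    rw [← hg, AddMonoidHom.comp_apply, ← toLex_ofLex (κ σ), hgv, hv, single_dotProduct]
    rfl
  have hv1 : v 0 = 1 := by
    have : AddSubgroup.closure (Set.range deg) ≤ AddSubgroup.zmultiples (v 0) :=
      (AddSubgroup.closure_le _).mpr <| by
        rintro _ ⟨σ, rfl⟩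
        exact Int.mem_zmultiples_iff.mpr ⟨_, hdeg σ⟩
    exact Int.eq_one_of_dvd_one hv0 (Int.mem_zmultiples_iff.mp (this (hsurj ▸ trivial)))
  rw [hdeg, hv1, one_mul]

theorem exists_isLowerTriangular_transition {κ₁ κ₂ : M →+ Lex (Fin r → ℤ)}
    (hκ₁ : ∀ a b, a ≤ b ↔ κ₁ a ≤ κ₁ b) (hgen₁ : AddSubgroup.closure (Set.range κ₁) = ⊤)
    (hκ₂ : Monotone κ₂) (hgen₂ : AddSubgroup.closure (Set.range κ₂) = ⊤) :
    ∃ N : Matrix (Fin r) (Fin r) ℤ, (∀ σ, ofLex (κ₂ σ) = N *ᵥ ofLex (κ₁ σ)) ∧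
      N.IsLowerTriangular ∧ ∀ i, N i i = 1 := by
  obtain ⟨g, hg⟩ := AddMonoidHom.exists_comp_eq_of_injective
    (OrderEmbedding.ofMapLEIff κ₁ fun a b => (hκ₁ a b).symm).injective hgen₁ κ₂
  obtain ⟨N, hN⟩ : ∃ N : Matrix (Fin r) (Fin r) ℤ, ∀ x, ofLex (g (toLex x)) = N *ᵥ x :=
    ⟨fun i l => ofLex (g (toLex (Pi.single l 1))) i, fun x => funext fun i =>
      ((Pi.evalAddMonoidHom _ i).comp
        ((ofLexAddEquiv _).toAddMonoidHom.comp g)).apply_toLex_eq_dotProduct x⟩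
  obtain ⟨hlow, hdiag⟩ := isLowerTriangular_of_toLex_mulVec_nonneg (N := N) fun x hx => by
    rw [← hN, toLex_ofLex]
    exact AddMonoidHom.map_nonneg_of_comp_eq (fun a b => (hκ₁ a b).2) hgen₁ hκ₂ hg hx
  have hsurj : Surjective N.mulVec := by
    have : g.range = ⊤ := by
      rw [eq_top_iff, ← hgen₂, AddSubgroup.closure_le]
      rintro _ ⟨σ, rfl⟩
      exact ⟨κ₁ σ, by rw [← g.comp_apply, hg]⟩
    intro y
    obtain ⟨x, hx⟩ := AddMonoidHom.range_eq_top.mp this (toLex y)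
    exact ⟨ofLex x, by rw [← hN, toLex_ofLex, hx, ofLex_toLex]⟩
  refine ⟨N, fun σ => ?_, hlow, diag_eq_one_of_isLowerTriangular hlow hdiag hsurj⟩
  rw [← hN, toLex_ofLex, ← g.comp_apply, hg]

end LatticeEmbedding

theorem stmt6_general {M : Type*} [AddCommMonoid M] [LinearOrder M]
    (deg : M → ℤ) (hdegadd : ∀ a b : M, deg (a + b) = deg a + deg b)
    (hdegmono : ∀ a b : M, a ≤ b → deg a ≤ deg b)
    (hdegsurj : AddSubgroup.closure (Set.range deg) = (⊤ : AddSubgroup ℤ))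
    (n : ℕ)
    (ι₁ ι₂ : M → (Fin (n + 1) → ℝ))
    (hadd₁ : ∀ a b : M, ι₁ (a + b) = ι₁ a + ι₁ b)
    (hadd₂ : ∀ a b : M, ι₂ (a + b) = ι₂ a + ι₂ b)
    (hord₁ : ∀ a b : M, a ≤ b ↔ rlexLE (ι₁ a) (ι₁ b))
    (hord₂ : ∀ a b : M, a ≤ b ↔ rlexLE (ι₂ a) (ι₂ b))
    (hgrp₁ : (AddSubgroup.closure (Set.range ι₁) : Set (Fin (n + 1) → ℝ)) =
      {x | ∀ i, ∃ m : ℤ, x i = (m : ℝ)})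
    (hgrp₂ : (AddSubgroup.closure (Set.range ι₂) : Set (Fin (n + 1) → ℝ)) =
      {x | ∀ i, ∃ m : ℤ, x i = (m : ℝ)}) :
    (∀ σ : M, ι₁ σ 0 = (deg σ : ℝ) ∧ ι₂ σ 0 = (deg σ : ℝ)) ∧
    ∃ A : Matrix (Fin n) (Fin n) ℤ,
      (∀ i, A i i = 1) ∧ (∀ i j : Fin n, i < j → A i j = 0) ∧
      ∃ b : Fin n → ℤ,
        (fun y : Fin n → ℝ =>
            (A.map (Int.cast : ℤ → ℝ)).mulVec y + fun i : Fin n => (b i : ℝ)) ''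
          closure {y : Fin n → ℝ | ∃ σ : M, (deg σ : ℝ) ≠ 0 ∧
            y = fun i : Fin n => ι₁ σ i.succ / (deg σ : ℝ)} =
        closure {y : Fin n → ℝ | ∃ σ : M, (deg σ : ℝ) ≠ 0 ∧
            y = fun i : Fin n => ι₂ σ i.succ / (deg σ : ℝ)} := by
  obtain ⟨κ₁, hι₁, hκ₁, hgen₁⟩ := exists_lex_int_lift ι₁ hadd₁ hord₁ hgrp₁
  obtain ⟨κ₂, hι₂, hκ₂, hgen₂⟩ := exists_lex_int_lift ι₂ hadd₂ hord₂ hgrp₂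
  have hdeg₁ := eq_ofLex_zero_of_monotone hκ₁ hgen₁ (deg := .mk' deg hdegadd) hdegmono hdegsurj
  have hdeg₂ := eq_ofLex_zero_of_monotone hκ₂ hgen₂ (deg := .mk' deg hdegadd) hdegmono hdegsurj
  have hfirst : ∀ σ, ι₁ σ 0 = deg σ ∧ ι₂ σ 0 = deg σ := fun σ =>
    ⟨by rw [hι₁, ← hdeg₁]; rfl, by rw [hι₂, ← hdeg₂]; rfl⟩
  obtain ⟨N, hN, hlow, hdiag⟩ :=
    exists_isLowerTriangular_transition hκ₁ hgen₁ (fun a b h => (hκ₂ a b).1 h) hgen₂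
  have hι : ∀ σ, ι₂ σ = N.map Int.cast *ᵥ ι₁ σ := fun σ => by
    ext i
    rw [hι₂, hN, funext (hι₁ σ)]
    exact RingHom.map_mulVec (Int.castRingHom ℝ) N _ i
  set A := N.submatrix Fin.succ Fin.succ
  have hAlow : A.IsLowerTriangular := fun i j hij => hlow (Fin.succ_lt_succ_iff.mpr hij)
  have hA : IsUnit (A.map (Int.cast : ℤ → ℝ)).det :=
    (IsLowerTriangular.det_eq_one (hAlow.map (Int.castRingHom ℝ))
      fun i => by simp [A, hdiag]).symm ▸ isUnit_one
  refine ⟨hfirst, A, fun i => hdiag i.succ, fun i j hij => hAlow hij, fun i => N i.succ 0, ?_⟩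
  rw [image_closure_mulVec_add hA]
  simp only [hι]
  exact congrArg closure
    (image_setOf_succ_div_eq (N.map Int.cast) ι₁ (fun σ => deg σ) fun σ _ => (hfirst σ).1)

theorem stmt6 {M : Type*} [AddCommMonoid M] [LinearOrder M]
    (hordadd : ∀ a b c : M, a < b → a + c < b + c)
    (deg : M → ℤ) (hdegadd : ∀ a b : M, deg (a + b) = deg a + deg b)
    (hdegmono : ∀ a b : M, a ≤ b → deg a ≤ deg b)
    (hdegsurj : AddSubgroup.closure (Set.range deg) = (⊤ : AddSubgroup ℤ))
    (n : ℕ)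
    (ι₁ ι₂ : M → (Fin (n + 1) → ℝ))
    (hadd₁ : ∀ a b : M, ι₁ (a + b) = ι₁ a + ι₁ b)
    (hadd₂ : ∀ a b : M, ι₂ (a + b) = ι₂ a + ι₂ b)
    (hinj₁ : Function.Injective ι₁) (hinj₂ : Function.Injective ι₂)
    (hord₁ : ∀ a b : M, a ≤ b ↔ rlexLE (ι₁ a) (ι₁ b))
    (hord₂ : ∀ a b : M, a ≤ b ↔ rlexLE (ι₂ a) (ι₂ b))
    (hgrp₁ : (AddSubgroup.closure (Set.range ι₁) : Set (Fin (n + 1) → ℝ)) =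
      {x | ∀ i, ∃ m : ℤ, x i = (m : ℝ)})
    (hgrp₂ : (AddSubgroup.closure (Set.range ι₂) : Set (Fin (n + 1) → ℝ)) =
      {x | ∀ i, ∃ m : ℤ, x i = (m : ℝ)}) :
    (∀ σ : M, ι₁ σ 0 = (deg σ : ℝ) ∧ ι₂ σ 0 = (deg σ : ℝ)) ∧
    ∃ A : Matrix (Fin n) (Fin n) ℤ,
      (∀ i, A i i = 1) ∧ (∀ i j : Fin n, i < j → A i j = 0) ∧
      ∃ b : Fin n → ℤ,
        (fun y : Fin n → ℝ =>
            (A.map (Int.cast : ℤ → ℝ)).mulVec y + fun i : Fin n => (b i : ℝ)) ''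
          closure {y : Fin n → ℝ | ∃ σ : M, (deg σ : ℝ) ≠ 0 ∧
            y = fun i : Fin n => ι₁ σ i.succ / (deg σ : ℝ)} =
        closure {y : Fin n → ℝ | ∃ σ : M, (deg σ : ℝ) ≠ 0 ∧
            y = fun i : Fin n => ι₂ σ i.succ / (deg σ : ℝ)} :=
  stmt6_general deg hdegadd hdegmono hdegsurj n ι₁ ι₂ hadd₁ hadd₂ hord₁ hord₂ hgrp₁ hgrp₂
end

section
/- Let V be a finite-dimensional real vector space and Σ ⊆ V a linearly graded, linearly bounded subsemigroup such that the subgroup ⟨Σ⟩_ℤ generated by Σ is a discrete subgroup of V spanning the linear span ⟨Σ⟩_ℝ of Σ (a lattice in ⟨Σ⟩_ℝ). Then Σ is asymptotically convex: for every σ ∈ ⟨Σ⟩_ℤ lying in the interior of the closure of cone(Σ), there is a positive integer k with kσ ∈ Σ. -/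
/-- The cone generated by a subset of a real vector space. -/
def coneGen {V : Type*} [AddCommMonoid V] [Module ℝ V] (S : Set V) : Set V :=
  {x | ∃ (m : ℕ) (c : Fin m → ℝ) (y : Fin m → V),
    (∀ i, 0 ≤ c i) ∧ (∀ i, y i ∈ S) ∧ x = ∑ i, c i • y i}

/-- Linear boundedness: containment in the nonnegative span of a basis of vectors of
positive degree. -/
def LinBddV {V : Type*} [AddCommGroup V] [Module ℝ V]
    (deg : V →ₗ[ℝ] ℝ) (S : Set V) : Prop :=
  ∃ v : Fin (Module.finrank ℝ V) → V, LinearIndependent ℝ v ∧ (∀ i, 0 < deg (v i)) ∧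
    S ⊆ {x | ∃ c : Fin (Module.finrank ℝ V) → ℝ, (∀ i, 0 ≤ c i) ∧ x = ∑ i, c i • v i}

/-!
Write `σ = ∑ cᵢ uᵢ` with `cᵢ > 0` and `uᵢ ∈ Σ`; this is possible because `σ` lies in the
interior of the convex cone, and splitting off a small multiple of a fixed element of `Σ` keeps
the sum nonempty. In coordinates with respect to a basis of the lattice `⟨Σ⟩_ℤ`, both `σ` and
the `uᵢ` are integral, so the affine space of real solutions `c` is cut out by rational
equations, and its rational points are dense in it. Hence `c` may be replaced by a positive
rational solution `q`, and clearing denominators gives `N • σ = ∑ nᵢ • uᵢ` with positive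
integers `N, nᵢ`, an element of `Σ`.
-/

open Matrix Filter Topology

theorem Convex.interior_closure_eq_interior {V : Type*} [NormedAddCommGroup V] [NormedSpace ℝ V]
    [FiniteDimensional ℝ V] {s : Set V} (hs : Convex ℝ s) : interior (closure s) = interior s := by
  rcases (interior (closure s)).eq_empty_or_nonempty with h | h
  · exact (interior_mono subset_closure).antisymm' (h ▸ Set.empty_subset _)
  refine hs.interior_closure_eq_interior_of_nonempty_interior ?_
  rw [hs.interior_nonempty_iff_affineSpan_eq_top, eq_top_iff,
    ← hs.closure.interior_nonempty_iff_affineSpan_eq_top.mp h]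
  exact affineSpan_le.mpr
    (closure_minimal (subset_affineSpan ℝ s) (affineSpan ℝ s).closed_of_finiteDimensional)

section ConeGen

variable {V : Type*} [AddCommGroup V] [Module ℝ V] {S : Set V}

theorem coneGen_subset_span (S : Set V) :
    coneGen S ⊆ Submodule.span ℝ S := by
  rintro x ⟨m, c, y, -, hy, rfl⟩
  exact Submodule.sum_mem _ fun i _ => Submodule.smul_mem _ _ (Submodule.subset_span (hy i))

theorem smul_mem_coneGen {t : ℝ} (ht : 0 ≤ t) {x : V} (hx : x ∈ coneGen S) :
    t • x ∈ coneGen S := by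
  obtain ⟨m, c, y, hc, hy, rfl⟩ := hx
  exact ⟨m, fun i => t * c i, y, fun i => mul_nonneg ht (hc i), hy,
    by simp [Finset.smul_sum, smul_smul]⟩

theorem add_mem_coneGen {x y : V} (hx : x ∈ coneGen S) (hy : y ∈ coneGen S) :
    x + y ∈ coneGen S := by
  obtain ⟨m, c, u, hc, hu, rfl⟩ := hx
  obtain ⟨n, d, w, hd, hw, rfl⟩ := hy
  refine ⟨m + n, Fin.append c d, Fin.append u w,
    Fin.addCases (by simpa using hc) (by simpa using hd),
    Fin.addCases (by simpa using hu) (by simpa using hw), ?_⟩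
  simp [Fin.sum_univ_add]

theorem convex_coneGen : Convex ℝ (coneGen S) := fun _ hx _ hy _ _ ha hb _ =>
  add_mem_coneGen (smul_mem_coneGen ha hx) (smul_mem_coneGen hb hy)

theorem exists_pos_sum_smul_eq {m : ℕ} {c : Fin m → ℝ} {y : Fin m → V} (hc : ∀ i, 0 ≤ c i)
    (hy : ∀ i, y i ∈ S) : ∃ (n : ℕ) (c' : Fin n → ℝ) (y' : Fin n → V),
      (∀ i, 0 < c' i) ∧ (∀ i, y' i ∈ S) ∧ ∑ i, c i • y i = ∑ i, c' i • y' i := by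
  induction m with
  | zero => exact ⟨0, Fin.elim0, Fin.elim0, fun i => i.elim0, fun i => i.elim0, by simp⟩
  | succ m ih =>
    obtain ⟨n, c', y', hc', hy', heq⟩ := ih (fun i => hc i.succ) (fun i => hy i.succ)
    rw [Fin.sum_univ_succ, heq]
    rcases (hc 0).eq_or_lt with h0 | h0
    · exact ⟨n, c', y', hc', hy', by simp [← h0]⟩
    · refine ⟨n + 1, Fin.cons (c 0) c', Fin.cons (y 0) y', Fin.cases h0 hc',
        Fin.cases (hy 0) hy', ?_⟩
      simp [Fin.sum_univ_succ]

theorem exists_pos_sum_smul_eq_of_mem_interior [TopologicalSpace V] [IsTopologicalAddGroup V]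
    [ContinuousSMul ℝ V] {s x : V} (hs : s ∈ S) (hx : x ∈ interior (coneGen S)) :
    ∃ (n : ℕ) (c : Fin (n + 1) → ℝ) (y : Fin (n + 1) → V),
      (∀ i, 0 < c i) ∧ (∀ i, y i ∈ S) ∧ x = ∑ i, c i • y i := by
  have hev : ∀ᶠ t : ℝ in 𝓝 0, x - t • s ∈ coneGen S := by
    have hcont : Continuous fun t : ℝ => x - t • s := by fun_prop
    exact hcont.continuousAt.eventually_mem (by simpa using mem_interior_iff_mem_nhds.mp hx)
  obtain ⟨t, ht, m, c, y, hc, hy, hrep⟩ := hev.exists_gt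
  obtain ⟨n, c', y', hc', hy', heq⟩ := exists_pos_sum_smul_eq hc hy
  refine ⟨n, Fin.cons t c', Fin.cons s y', Fin.cases ht hc', Fin.cases hs hy', ?_⟩
  rw [Fin.sum_univ_succ]
  simp only [Fin.cons_zero, Fin.cons_succ, ← heq, ← hrep]
  abel

end ConeGen

theorem LinearMap.exists_comp_comp_eq_self {K E F : Type*} [Field K] [AddCommGroup E] [Module K E]
    [AddCommGroup F] [Module K F] (f : E →ₗ[K] F) : ∃ g : F →ₗ[K] E, f ∘ₗ g ∘ₗ f = f := by
  obtain ⟨s, hs⟩ := f.rangeRestrict.exists_rightInverse_of_surjective f.range_rangeRestrict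
  obtain ⟨p, hp⟩ := (LinearMap.range f).subtype.exists_leftInverse_of_injective
    (LinearMap.range f).ker_subtype
  refine ⟨s ∘ₗ p, LinearMap.ext fun x => ?_⟩
  have hpf : p (f x) = f.rangeRestrict x := LinearMap.congr_fun hp (f.rangeRestrict x)
  have hfs : ∀ y, f (s y) = y := fun y => congrArg Subtype.val (LinearMap.congr_fun hs y)
  simp [hpf, hfs]

namespace Matrix

variable {m n : Type*} [Fintype n]

theorem ratCast_comp_mulVec (M : Matrix m n ℚ) (v : n → ℚ) :
    ((↑) : ℚ → ℝ) ∘ (M *ᵥ v) = M.map (↑) *ᵥ ((↑) ∘ v) :=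
  funext fun i => RingHom.map_mulVec (Rat.castHom ℝ) M v i

variable [Fintype m]

theorem exists_mul_mul_eq_self {K : Type*} [Field K] (A : Matrix m n K) :
    ∃ G : Matrix n m K, A * G * A = A := by
  classical
  obtain ⟨g, hg⟩ := (toLin' A).exists_comp_comp_eq_self
  refine ⟨LinearMap.toMatrix' g, ?_⟩
  have := congrArg LinearMap.toMatrix' hg
  rwa [LinearMap.toMatrix'_comp, LinearMap.toMatrix'_comp, LinearMap.toMatrix'_toLin',
    ← Matrix.mul_assoc] at this

theorem exists_rat_mulVec_eq_mem (A : Matrix m n ℚ) (d : m → ℚ) {c : n → ℝ}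
    (hc : A.map (↑) *ᵥ c = (↑) ∘ d) {U : Set (n → ℝ)} (hU : IsOpen U) (hcU : c ∈ U) :
    ∃ q : n → ℚ, A *ᵥ q = d ∧ (↑) ∘ q ∈ U := by
  obtain ⟨G, hG⟩ := A.exists_mul_mul_eq_self
  have hG' : A.map ((↑) : ℚ → ℝ) * G.map ((↑) : ℚ → ℝ) * A.map ((↑) : ℚ → ℝ) =
      A.map ((↑) : ℚ → ℝ) := by
    have := congrArg (·.map (Rat.castHom ℝ)) hG
    simp only [Matrix.map_mul] at this
    exact this
  -- A retraction of `n → ℝ` onto the real solutions which, being defined over `ℚ`,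
  -- sends rational points to rational solutions.
  let φ : (n → ℝ) → n → ℝ := fun x => x - G.map (↑) *ᵥ (A.map (↑) *ᵥ x - (↑) ∘ d)
  have hφA : ∀ x, A.map (↑) *ᵥ φ x = (↑) ∘ d := by
    intro x
    simp only [φ, ← hc, mulVec_sub, mulVec_mulVec, ← Matrix.mul_assoc]
    rw [hG', sub_sub_cancel]
  have hφ : Continuous φ := by fun_prop
  obtain ⟨q', hq'⟩ : ∃ q' : n → ℚ, ((↑) : ℚ → ℝ) ∘ q' ∈ φ ⁻¹' U :=
    (DenseRange.piMap fun _ => Rat.denseRange_cast).exists_mem_open (hU.preimage hφ)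
      ⟨c, by simpa [φ, hc] using hcU⟩
  have hq : ((↑) : ℚ → ℝ) ∘ (q' - G *ᵥ (A *ᵥ q' - d)) = φ ((↑) ∘ q') := by
    have hr : ((↑) : ℚ → ℝ) ∘ (A *ᵥ q' - d) = (↑) ∘ (A *ᵥ q') - (↑) ∘ d := by
      ext; simp
    ext i
    simp [φ, ← hr, ← ratCast_comp_mulVec]
  refine ⟨q' - G *ᵥ (A *ᵥ q' - d), (Rat.cast_injective (α := ℝ)).comp_left ?_, hq ▸ hq'⟩
  dsimp only
  rw [ratCast_comp_mulVec, hq, hφA]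

theorem exists_pos_rat_mulVec_eq (A : Matrix m n ℚ) (d : m → ℚ) {c : n → ℝ}
    (hc : A.map (↑) *ᵥ c = (↑) ∘ d) (hpos : ∀ l, 0 < c l) :
    ∃ q : n → ℚ, A *ᵥ q = d ∧ ∀ l, 0 < q l := by
  have hU : IsOpen (Set.univ.pi fun _ : n => Set.Ioi (0 : ℝ)) :=
    isOpen_set_pi Set.finite_univ fun _ _ => isOpen_Ioi
  obtain ⟨q, hq, hqU⟩ := A.exists_rat_mulVec_eq_mem d hc hU fun l _ => hpos l
  exact ⟨q, hq, fun l => by simpa using hqU l (Set.mem_univ l)⟩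

end Matrix

theorem ZLattice.exists_pos_rat_sum_smul_eq {V : Type*} [NormedAddCommGroup V] [NormedSpace ℝ V]
    [FiniteDimensional ℝ V] (L : Submodule ℤ V) [DiscreteTopology L] [IsZLattice ℝ L]
    {κ : Type*} [Fintype κ] {u : κ → V} (hu : ∀ l, u l ∈ L) {c : κ → ℝ}
    (hc : ∀ l, 0 < c l) (hσ : ∑ l, c l • u l ∈ L) :
    ∃ q : κ → ℚ, (∀ l, 0 < q l) ∧ ∑ l, (q l : ℝ) • u l = ∑ l, c l • u l := by
  classical
  let b := Module.Free.chooseBasis ℤ L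
  let B := b.ofZLatticeBasis ℝ L
  let A : Matrix _ κ ℚ := Matrix.of fun i l => (b.repr ⟨u l, hu l⟩ i : ℚ)
  have hA : ∀ x : κ → ℝ, A.map (↑) *ᵥ x = B.equivFun (∑ l, x l • u l) := by
    intro x
    ext i
    have hB : ∀ l, B.repr (u l) i = b.repr ⟨u l, hu l⟩ i := fun l =>
      b.ofZLatticeBasis_repr_apply ℝ L ⟨u l, hu l⟩ i
    simp [A, mulVec, dotProduct, hB, mul_comm]
  have hd : ∀ i, B.equivFun (∑ l, c l • u l) i = (b.repr ⟨_, hσ⟩ i : ℚ) := fun i =>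
    by simpa using b.ofZLatticeBasis_repr_apply ℝ L ⟨_, hσ⟩ i
  obtain ⟨q, hq, hqpos⟩ := A.exists_pos_rat_mulVec_eq (fun i => (b.repr ⟨_, hσ⟩ i : ℚ))
    (by rw [hA]; exact funext hd) hc
  refine ⟨q, hqpos, B.equivFun.injective ?_⟩
  have h1 := hA ((↑) ∘ q)
  simp only [Function.comp_apply] at h1
  rw [← h1, ← ratCast_comp_mulVec, hq]
  exact (funext hd).symm

section Semigroup

variable {M : Type*} [AddCommMonoid M] {S : Set M}

theorem sum_fin_succ_mem_of_add_mem (hadd : ∀ x ∈ S, ∀ y ∈ S, x + y ∈ S) :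
    ∀ {m : ℕ} {f : Fin (m + 1) → M}, (∀ i, f i ∈ S) → ∑ i, f i ∈ S
  | 0, f, hf => by simpa using hf 0
  | _ + 1, f, hf => by
    rw [Fin.sum_univ_succ]
    exact hadd _ (hf 0) _ (sum_fin_succ_mem_of_add_mem hadd fun i => hf i.succ)

theorem nsmul_mem_of_add_mem (hadd : ∀ x ∈ S, ∀ y ∈ S, x + y ∈ S) {x : M} (hx : x ∈ S)
    {n : ℕ} (hn : 0 < n) : n • x ∈ S := by
  obtain ⟨k, rfl⟩ := Nat.exists_eq_add_of_lt hn
  simpa using sum_fin_succ_mem_of_add_mem hadd (f := fun _ : Fin (k + 1) => x) fun _ => hx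

end Semigroup

theorem exists_nat_mul_eq_natCast {ι : Type*} [Fintype ι] {q : ι → ℚ} (hq : ∀ i, 0 < q i) :
    ∃ N : ℕ, 0 < N ∧ ∃ n : ι → ℕ, (∀ i, 0 < n i) ∧ ∀ i, (N : ℚ) * q i = n i := by
  classical
  have hden : ∀ i, 0 < ∏ j ∈ Finset.univ.erase i, (q j).den :=
    fun i => Finset.prod_pos fun j _ => (q j).den_pos
  refine ⟨∏ i, (q i).den, Finset.prod_pos fun i _ => (q i).den_pos,
    fun i => (q i).num.toNat * ∏ j ∈ Finset.univ.erase i, (q j).den,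
    fun i => Nat.mul_pos (Int.lt_toNat.mpr (Rat.num_pos.mpr (hq i))) (hden i), fun i => ?_⟩
  rw [← Finset.mul_prod_erase _ _ (Finset.mem_univ i)]
  push_cast
  have hnum : ((q i).num.toNat : ℚ) = (q i).num := by
    exact_mod_cast Int.toNat_of_nonneg (Rat.num_nonneg.mpr (hq i).le)
  rw [hnum, ← Rat.den_mul_eq_num]
  ring

theorem exists_nsmul_mem_of_sum_ratCast_smul {V : Type*} [AddCommGroup V] [Module ℝ V]
    {S : Set V} (hadd : ∀ x ∈ S, ∀ y ∈ S, x + y ∈ S) {m : ℕ} {u : Fin (m + 1) → V}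
    (hu : ∀ i, u i ∈ S) {q : Fin (m + 1) → ℚ} (hq : ∀ i, 0 < q i) :
    ∃ k : ℕ, 0 < k ∧ k • ∑ i, (q i : ℝ) • u i ∈ S := by
  obtain ⟨N, hN, n, hn, hNn⟩ := exists_nat_mul_eq_natCast hq
  refine ⟨N, hN, ?_⟩
  have hsum : N • ∑ i, (q i : ℝ) • u i = ∑ i, n i • u i := by
    rw [Finset.smul_sum]
    refine Finset.sum_congr rfl fun i _ => ?_
    rw [← Nat.cast_smul_eq_nsmul ℝ, smul_smul, ← Nat.cast_smul_eq_nsmul ℝ (n i)]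
    congr 1
    exact_mod_cast hNn i
  rw [hsum]
  exact sum_fin_succ_mem_of_add_mem hadd fun i => nsmul_mem_of_add_mem hadd (hu i) (hn i)

theorem stmt17_general {V : Type*} [NormedAddCommGroup V] [NormedSpace ℝ V] [FiniteDimensional ℝ V]
    (S : Set V) (hne : S.Nonempty) (hadd : ∀ x ∈ S, ∀ y ∈ S, x + y ∈ S)
    (hdisc : DiscreteTopology ↥(AddSubgroup.closure S)) :
    ∀ σ ∈ (AddSubgroup.closure S : Set V), σ ∈ interior (closure (coneGen S)) →
      ∃ k : ℕ, 0 < k ∧ k • σ ∈ S := by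
  intro σ hσL hσ
  rw [convex_coneGen.interior_closure_eq_interior] at hσ
  let L := (AddSubgroup.closure S).toIntSubmodule
  have : DiscreteTopology L := hdisc
  have : IsZLattice ℝ L := by
    refine ⟨top_unique ?_⟩
    calc ⊤ = Submodule.span ℝ S :=
          ((Submodule.span ℝ S).eq_top_of_nonempty_interior'
            ⟨σ, interior_mono (coneGen_subset_span S) hσ⟩).symm
      _ ≤ Submodule.span ℝ (L : Set V) := Submodule.span_mono AddSubgroup.subset_closure
  obtain ⟨s, hs⟩ := hne
  obtain ⟨n, c, u, hc, hu, rfl⟩ := exists_pos_sum_smul_eq_of_mem_interior hs hσ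
  obtain ⟨q, hq, hqσ⟩ :=
    ZLattice.exists_pos_rat_sum_smul_eq L (fun l => AddSubgroup.subset_closure (hu l)) hc hσL
  rw [← hqσ]
  exact exists_nsmul_mem_of_sum_ratCast_smul hadd hu hq

theorem stmt17 {V : Type*} [NormedAddCommGroup V] [NormedSpace ℝ V] [FiniteDimensional ℝ V]
    (deg : V →ₗ[ℝ] ℝ) (hsurj : Function.Surjective deg)
    (S : Set V) (hne : S.Nonempty) (hadd : ∀ x ∈ S, ∀ y ∈ S, x + y ∈ S)
    (hint : ∀ x ∈ S, ∃ m : ℤ, deg x = (m : ℝ))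
    (hlb : LinBddV deg S)
    (hdisc : DiscreteTopology ↥(AddSubgroup.closure S)) :
    ∀ σ ∈ (AddSubgroup.closure S : Set V), σ ∈ interior (closure (coneGen S)) →
      ∃ k : ℕ, 0 < k ∧ k • σ ∈ S :=
  stmt17_general S hne hadd hdisc
end
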